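/- arXiv:2310.12257 — 2 statements merged into one kernel-verified Lean document; each statement's English description precedes it below -/
import Mathlib

section
/- Let w : (0, l) → ℝ be C¹ satisfying the Riccati inequality w' + w² + K ≤ 0 for a continuous K, and let φ : [0, l) → ℝ be C² with φ(0) = 0, φ'(0) = 1, φ > 0 on (0, l), and φ(r)²w(r) → 0 as r → 0⁺. Then for all r ∈ (0, l), φ(r)² w(r) ≤ φ(r) φ'(r) + ∫₀^r (−φ(t)φ''(t) − φ(t)² K(t)) dt. -/
open Set intervalIntegral

/-- Riccati integral inequality: if `w' + w² + K ≤ 0` on `(0,l)`, `φ` is `C²` on `[0,l)`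
with `φ(0)=0`, `φ'(0)=1`, `φ>0` on `(0,l)`, and `φ²w → 0` at `0⁺`, then
`φ(r)²w(r) ≤ φ(r)φ'(r) + ∫₀^r (−φφ'' − φ²K)`. -/
theorem stmt_7 (l : ℝ) (hl : 0 < l) (K w φ φ' φ'' : ℝ → ℝ)
    (hK : ContinuousOn K (Set.Ico 0 l))
    (hw : ∀ t ∈ Set.Ioo 0 l, DifferentiableAt ℝ w t)
    (hw' : ContinuousOn (deriv w) (Set.Ioo 0 l))
    (hRic : ∀ t ∈ Set.Ioo 0 l, deriv w t + w t ^ 2 + K t ≤ 0)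
    (hφ' : ∀ t ∈ Set.Ico 0 l, HasDerivWithinAt φ (φ' t) (Set.Ico 0 l) t)
    (hφ'' : ∀ t ∈ Set.Ico 0 l, HasDerivWithinAt φ' (φ'' t) (Set.Ico 0 l) t)
    (hφ''c : ContinuousOn φ'' (Set.Ico 0 l))
    (hφ0 : φ 0 = 0) (hφ'0 : φ' 0 = 1)
    (hφpos : ∀ t ∈ Set.Ioo 0 l, 0 < φ t)
    (hlim : Filter.Tendsto (fun r => φ r ^ 2 * w r) (nhdsWithin 0 (Set.Ioi 0)) (nhds 0)) :
    ∀ r ∈ Set.Ioo 0 l,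
      φ r ^ 2 * w r ≤ φ r * φ' r + ∫ t in (0 : ℝ)..r, (-(φ t * φ'' t) - φ t ^ 2 * K t) := by
  have hφc : ContinuousOn φ (Set.Ico 0 l) := fun t ht =>
    ((hφ' t ht).differentiableWithinAt).continuousWithinAt
  have hφ'c : ContinuousOn φ' (Set.Ico 0 l) := fun t ht =>
    ((hφ'' t ht).differentiableWithinAt).continuousWithinAt
  set g : ℝ → ℝ := fun t => -(φ t * φ'' t) - φ t ^ 2 * K t with hg
  have hgc : ContinuousOn g (Set.Ico 0 l) :=
    ((hφc.mul hφ''c).neg).sub ((hφc.pow 2).mul hK)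
  have hgint : ∀ x ∈ Set.Ico 0 l, IntervalIntegrable g MeasureTheory.volume 0 x := by
    intro x hx
    apply (hgc.mono _).intervalIntegrable
    rw [Set.uIcc_of_le hx.1]
    exact fun y hy => ⟨hy.1, lt_of_le_of_lt hy.2 hx.2⟩
  set H : ℝ → ℝ := fun x => φ x * φ' x + (∫ t in (0:ℝ)..x, g t) - φ x ^ 2 * w x with hHdef
  -- derivative of H at interior points
  have hHd : ∀ t ∈ Set.Ioo 0 l, HasDerivAt H
      ((φ' t - φ t * w t) ^ 2 - φ t ^ 2 * (deriv w t + w t ^ 2 + K t)) t := by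
    intro t ht
    have hmem : Set.Ico 0 l ∈ nhds t :=
      Filter.mem_of_superset (Ioo_mem_nhds ht.1 ht.2) Set.Ioo_subset_Ico_self
    have hφd : HasDerivAt φ (φ' t) t := (hφ' t ⟨le_of_lt ht.1, ht.2⟩).hasDerivAt hmem
    have hφ'd : HasDerivAt φ' (φ'' t) t := (hφ'' t ⟨le_of_lt ht.1, ht.2⟩).hasDerivAt hmem
    have hwd : HasDerivAt w (deriv w t) t := (hw t ht).hasDerivAt
    have hgmeas : StronglyMeasurableAtFilter g (nhds t) MeasureTheory.volume :=
      ⟨Set.Ico 0 l, hmem, hgc.aestronglyMeasurable measurableSet_Ico⟩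
    have hgcont : ContinuousAt g t := hgc.continuousAt hmem
    have hintd : HasDerivAt (fun x => ∫ s in (0:ℝ)..x, g s) (g t) t :=
      intervalIntegral.integral_hasDerivAt_right (hgint t ⟨le_of_lt ht.1, ht.2⟩) hgmeas hgcont
    have h1 : HasDerivAt (fun x => φ x * φ' x) (φ' t * φ' t + φ t * φ'' t) t := hφd.mul hφ'd
    have h2 : HasDerivAt (fun x => φ x ^ 2 * w x)
        ((2 : ℕ) * φ t ^ (2 - 1) * φ' t * w t + φ t ^ 2 * deriv w t) t := (hφd.pow 2).mul hwd
    have := (h1.add hintd).sub h2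
    convert this using 1
    · rfl
    · rfl
    · rfl
    simp only [hg]
    ring
  intro r hr
  have hmono : ∀ ε ∈ Set.Ioo 0 r, H ε ≤ H r := by
    intro ε hε
    have hsub : Set.Icc ε r ⊆ Set.Ioo 0 l := fun x hx =>
      ⟨lt_of_lt_of_le hε.1 hx.1, lt_of_le_of_lt hx.2 hr.2⟩
    have hcont : ContinuousOn H (Set.Icc ε r) := fun x hx =>
      ((hHd x (hsub hx)).continuousAt).continuousWithinAt
    have hdiff : DifferentiableOn ℝ H (interior (Set.Icc ε r)) := by
      rw [interior_Icc]
      exact fun x hx => ((hHd x (hsub (Set.Ioo_subset_Icc_self hx))).differentiableAt).differentiableWithinAt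
    have hnn : ∀ x ∈ interior (Set.Icc ε r), 0 ≤ deriv H x := by
      rw [interior_Icc]
      intro x hx
      have hx' := hsub (Set.Ioo_subset_Icc_self hx)
      rw [(hHd x hx').deriv]
      have h1 : φ x ^ 2 * (deriv w x + w x ^ 2 + K x) ≤ 0 :=
        mul_nonpos_of_nonneg_of_nonpos (sq_nonneg _) (hRic x hx')
      nlinarith [sq_nonneg (φ' x - φ x * w x)]
    exact monotoneOn_of_deriv_nonneg (convex_Icc ε r) hcont hdiff hnn
      ⟨le_refl ε, le_of_lt hε.2⟩ ⟨le_of_lt hε.2, le_refl r⟩ (le_of_lt hε.2)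
  -- H tends to 0 at 0⁺
  have hIoo_sub : Set.Ioo (0:ℝ) l ⊆ Set.Ico 0 l := Set.Ioo_subset_Ico_self
  have hnhds : nhdsWithin (0:ℝ) (Set.Ioo 0 l) = nhdsWithin 0 (Set.Ioi 0) :=
    nhdsWithin_Ioo_eq_nhdsGT hl
  have T1 : Filter.Tendsto (fun x => φ x * φ' x) (nhdsWithin 0 (Set.Ioi 0)) (nhds 0) := by
    have hc : ContinuousWithinAt (fun x => φ x * φ' x) (Set.Ico 0 l) 0 :=
      (hφc.mul hφ'c) 0 ⟨le_refl 0, hl⟩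
    have := (hc.mono hIoo_sub).tendsto
    rw [hnhds, hφ0, zero_mul] at this
    exact this
  have T2 : Filter.Tendsto (fun x => ∫ t in (0:ℝ)..x, g t) (nhdsWithin 0 (Set.Ioi 0)) (nhds 0) := by
    have hIcomem : Set.Ico 0 l ∈ nhdsWithin (0:ℝ) (Set.Ioi 0) := by
      refine Filter.mem_of_superset (Filter.inter_mem self_mem_nhdsWithin
        (mem_nhdsWithin_of_mem_nhds (Iio_mem_nhds hl))) ?_
      rw [Set.Ioi_inter_Iio]
      exact Set.Ioo_subset_Ico_self
    have hgmeas : StronglyMeasurableAtFilter g (nhdsWithin (0:ℝ) (Set.Ioi 0))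
        MeasureTheory.volume :=
      ⟨Set.Ico 0 l, hIcomem, hgc.aestronglyMeasurable measurableSet_Ico⟩
    have hgcont : ContinuousWithinAt g (Set.Ioi 0) 0 :=
      (hgc 0 ⟨le_refl 0, hl⟩).mono_of_mem_nhdsWithin hIcomem
    have hD : HasDerivWithinAt (fun x => ∫ t in (0:ℝ)..x, g t) (g 0) (Set.Ici 0) 0 :=
      intervalIntegral.integral_hasDerivWithinAt_right
        (hgint 0 ⟨le_refl 0, hl⟩) hgmeas hgcont
    have hc := hD.continuousWithinAt.tendsto
    rw [intervalIntegral.integral_same] at hc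
    exact hc.mono_left (nhdsWithin_mono 0 Set.Ioi_subset_Ici_self)
  have TH : Filter.Tendsto H (nhdsWithin 0 (Set.Ioi 0)) (nhds 0) := by
    have := (T1.add T2).sub hlim
    simpa using this
  have hev : ∀ᶠ ε in nhdsWithin (0:ℝ) (Set.Ioi 0), H ε ≤ H r := by
    filter_upwards [Ioo_mem_nhdsGT_of_mem ⟨le_refl (0:ℝ), hr.1⟩] with ε hε
    exact hmono ε hε
  have h0 : (0:ℝ) ≤ H r := le_of_tendsto TH hev
  simp only [hHdef] at h0
  linarith
end

section
/- Under the hypotheses of the previous statement, if additionally J : (0,l) → (0,∞) is C¹ with w = (ln J)' and J(r)/φ(r) → 1 as r → 0⁺, then ln(J(r)/φ(r)) ≤ −∫₀^r (1/φ(t)²) ∫₀^t (φ''(s) + φ(s)K(s)) φ(s) ds dt for all r ∈ (0,l). -/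
set_option maxHeartbeats 1000000


open Set intervalIntegral MeasureTheory Filter

/-- Under the Riccati integral inequality hypotheses, if moreover `J > 0` is `C¹` with
`(ln J)' = w` and `J/φ → 1` at `0⁺`, then
`ln(J(r)/φ(r)) ≤ −∫₀^r (1/φ(t)²) ∫₀^t (φ''(s) + φ(s)K(s)) φ(s) ds dt`. -/
theorem stmt_8 (l : ℝ) (hl : 0 < l) (K w φ φ' φ'' J : ℝ → ℝ)
    (hK : ContinuousOn K (Set.Ico 0 l))
    (hw : ∀ t ∈ Set.Ioo 0 l, DifferentiableAt ℝ w t)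
    (hw' : ContinuousOn (deriv w) (Set.Ioo 0 l))
    (hRic : ∀ t ∈ Set.Ioo 0 l, deriv w t + w t ^ 2 + K t ≤ 0)
    (hφ' : ∀ t ∈ Set.Ico 0 l, HasDerivWithinAt φ (φ' t) (Set.Ico 0 l) t)
    (hφ'' : ∀ t ∈ Set.Ico 0 l, HasDerivWithinAt φ' (φ'' t) (Set.Ico 0 l) t)
    (hφ''c : ContinuousOn φ'' (Set.Ico 0 l))
    (hφ0 : φ 0 = 0) (hφ'0 : φ' 0 = 1)
    (hφpos : ∀ t ∈ Set.Ioo 0 l, 0 < φ t)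
    (hJpos : ∀ t ∈ Set.Ioo 0 l, 0 < J t)
    (hJderiv : ∀ t ∈ Set.Ioo 0 l, HasDerivAt J (w t * J t) t)
    (hJlim : Filter.Tendsto (fun r => J r / φ r) (nhdsWithin 0 (Set.Ioi 0)) (nhds 1)) :
    ∀ r ∈ Set.Ioo 0 l,
      Real.log (J r / φ r) ≤
        -∫ t in (0 : ℝ)..r, (1 / φ t ^ 2) * ∫ s in (0 : ℝ)..t, (φ'' s + φ s * K s) * φ s := by
  have hIoo : Ioo (0:ℝ) l ⊆ Ico 0 l := Ioo_subset_Ico_self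
  have hφc : ContinuousOn φ (Ico 0 l) := fun t ht => (hφ' t ht).continuousWithinAt
  have hφ'c : ContinuousOn φ' (Ico 0 l) := fun t ht => (hφ'' t ht).continuousWithinAt
  set G : ℝ → ℝ := fun s => (φ'' s + φ s * K s) * φ s with hGdef
  have hGc : ContinuousOn G (Ico 0 l) := (hφ''c.add (hφc.mul hK)).mul hφc
  have hnhds : ∀ t ∈ Ioo 0 l, Ico 0 l ∈ nhds t := fun t ht =>
    Filter.mem_of_superset (isOpen_Ioo.mem_nhds ht) hIoo
  have hφD : ∀ t ∈ Ioo 0 l, HasDerivAt φ (φ' t) t := fun t ht =>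
    (hφ' t (hIoo ht)).hasDerivAt (hnhds t ht)
  have hφ'D : ∀ t ∈ Ioo 0 l, HasDerivAt φ' (φ'' t) t := fun t ht =>
    (hφ'' t (hIoo ht)).hasDerivAt (hnhds t ht)
  have hIccsub : ∀ t : ℝ, t < l → Icc (0:ℝ) t ⊆ Ico 0 l := fun t h1 x hx =>
    ⟨hx.1, lt_of_le_of_lt hx.2 h1⟩
  have hGint : ∀ t, 0 ≤ t → t < l → IntervalIntegrable G MeasureTheory.volume 0 t := fun t h0 h1 =>
    (hGc.mono (by rw [uIcc_of_le h0]; exact hIccsub t h1)).intervalIntegrable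
  set P : ℝ → ℝ := fun t => ∫ s in (0:ℝ)..t, G s with hPdef
  have hPD : ∀ t ∈ Ioo 0 l, HasDerivAt P (G t) t := fun t ht =>
    intervalIntegral.integral_hasDerivAt_right (hGint t ht.1.le ht.2)
      ((hGc.mono hIoo).stronglyMeasurableAtFilter isOpen_Ioo t ht)
      ((hGc t (hIoo ht)).continuousAt (hnhds t ht))
  -- the function h = φ²w - φφ' and H = h + P
  set h : ℝ → ℝ := fun t => φ t ^ 2 * w t - φ t * φ' t with hhdef
  set H : ℝ → ℝ := fun t => h t + P t with hHdef
  have hHD : ∀ t ∈ Ioo 0 l, HasDerivAt H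
      (2 * φ t * φ' t * w t + φ t ^ 2 * deriv w t - (φ' t * φ' t + φ t * φ'' t) + G t) t := by
    intro t ht
    have h1 : HasDerivAt (fun x => φ x ^ 2 * w x)
        (2 * φ t * φ' t * w t + φ t ^ 2 * deriv w t) t := by
      have := ((hφD t ht).pow 2).mul ((hw t ht).hasDerivAt)
      exact this.congr_deriv (by simp only [Pi.pow_apply, Nat.cast_ofNat]; ring)
    exact ((h1.sub ((hφD t ht).mul (hφ'D t ht))).add (hPD t ht))
  have hHD' : ∀ t ∈ Ioo 0 l, deriv H t ≤ 0 := by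
    intro t ht
    rw [(hHD t ht).deriv]
    have hric := hRic t ht
    have hGt : G t = (φ'' t + φ t * K t) * φ t := rfl
    rw [hGt]
    nlinarith [sq_nonneg (φ t * w t - φ' t), sq_nonneg (φ t), mul_nonneg (sq_nonneg (φ t))
      (neg_nonneg.mpr hric)]
  have hHanti : AntitoneOn H (Ioo 0 l) := by
    refine antitoneOn_of_deriv_nonpos (convex_Ioo 0 l) (fun t ht => (hHD t ht).continuousAt.continuousWithinAt) (fun t ht => ?_) (fun t ht => ?_)
    · exact (hHD t (by rwa [interior_Ioo] at ht)).differentiableAt.differentiableWithinAt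
    · exact hHD' t (by rwa [interior_Ioo] at ht)
  -- ψ and its derivative q
  set ψ : ℝ → ℝ := fun t => Real.log (J t) - Real.log (φ t) with hψdef
  set q : ℝ → ℝ := fun t => w t - φ' t / φ t with hqdef
  have hψD : ∀ t ∈ Ioo 0 l, HasDerivAt ψ (q t) t := by
    intro t ht
    have h1 := ((hJderiv t ht).log (hJpos t ht).ne').sub ((hφD t ht).log (hφpos t ht).ne')
    exact h1.congr_deriv (by rw [mul_div_assoc, div_self (hJpos t ht).ne', mul_one])
  have hqc : ContinuousOn q (Ioo 0 l) := by
    refine ContinuousOn.sub (fun t ht => (hw t ht).continuousAt.continuousWithinAt) ?_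
    exact (hφ'c.mono hIoo).div (hφc.mono hIoo) (fun t ht => (hφpos t ht).ne')
  have hFTC : ∀ a b : ℝ, a ∈ Ioo 0 l → b ∈ Ioo 0 l → a ≤ b →
      ψ b - ψ a = ∫ t in a..b, q t := by
    intro a b ha hb hab
    have hsub : uIcc a b ⊆ Ioo 0 l := by
      rw [uIcc_of_le hab]
      exact fun x hx => ⟨lt_of_lt_of_le ha.1 hx.1, lt_of_le_of_lt hx.2 hb.2⟩
    exact (intervalIntegral.integral_eq_sub_of_hasDerivAt
      (fun t ht => hψD t (hsub ht)) ((hqc.mono hsub).intervalIntegrable)).symm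
  have hψ0 : Filter.Tendsto ψ (nhdsWithin 0 (Set.Ioi 0)) (nhds 0) := by
    have h1 : Filter.Tendsto (fun r => Real.log (J r / φ r)) (nhdsWithin 0 (Set.Ioi 0))
        (nhds 0) := by
      have := (Real.continuousAt_log one_ne_zero).tendsto.comp hJlim
      simpa [Function.comp_def] using this
    refine h1.congr' ?_
    filter_upwards [Ioo_mem_nhdsGT_of_mem (by constructor <;> simp [hl] : (0:ℝ) ∈ Ico 0 l)]
      with t ht
    exact Real.log_div (hJpos t ht).ne' (hφpos t ht).ne'
  -- h = φ² q on Ioo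
  have hhq : ∀ t ∈ Ioo 0 l, h t = φ t ^ 2 * q t := by
    intro t ht
    have := (hφpos t ht).ne'
    simp only [hqdef, hhdef]
    field_simp
  have hHsplit : ∀ x, H x = h x + P x := fun _ => rfl
  clear_value G P h H ψ q
  -- Step: H ≤ 0 on Ioo 0 l
  have hHle : ∀ t ∈ Ioo 0 l, H t ≤ 0 := by
    by_contra hcon
    push_neg at hcon
    obtain ⟨t₀, ht₀, hH0⟩ := hcon
    set c := H t₀ with hcdef
    obtain ⟨M, hM⟩ := isCompact_Icc.exists_bound_of_continuousOn
      (hφ'c.mono (hIccsub t₀ ht₀.2))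
    have hM1 : 1 ≤ M := by
      have := hM 0 ⟨le_refl 0, ht₀.1.le⟩
      rwa [hφ'0, norm_one] at this
    have hMpos : (0:ℝ) < M := lt_of_lt_of_le one_pos hM1
    have hφub : ∀ t ∈ Icc 0 t₀, φ t ≤ M * t := by
      intro t ht
      have hb := (convex_Icc (0:ℝ) t₀).norm_image_sub_le_of_norm_hasDerivWithin_le
        (fun x hx => (hφ' x (hIccsub t₀ ht₀.2 hx)).mono (hIccsub t₀ ht₀.2))
        hM (left_mem_Icc.mpr ht₀.1.le) ht
      rw [hφ0, sub_zero, sub_zero] at hb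
      calc φ t ≤ |φ t| := le_abs_self _
        _ ≤ M * |t| := by simpa [Real.norm_eq_abs] using hb
        _ = M * t := by rw [abs_of_nonneg ht.1]
    obtain ⟨C, hC⟩ := isCompact_Icc.exists_bound_of_continuousOn (hGc.mono (hIccsub t₀ ht₀.2))
    have hCpos : (0:ℝ) ≤ C := le_trans (norm_nonneg _) (hC 0 ⟨le_refl 0, ht₀.1.le⟩)
    set δ := min t₀ (c / (2 * (C + 1))) with hδdef
    have hδpos : 0 < δ := lt_min ht₀.1 (by positivity)
    have hδt₀ : δ ≤ t₀ := min_le_left _ _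
    have hδl : δ < l := lt_of_le_of_lt hδt₀ ht₀.2
    have hδIoo : δ ∈ Ioo 0 l := ⟨hδpos, hδl⟩
    have hhε : ∀ ε ∈ Ioc 0 δ, c / 2 ≤ h ε := by
      intro ε hε
      have hεI : ε ∈ Ioo 0 l := ⟨hε.1, lt_of_le_of_lt (hε.2.trans hδt₀) ht₀.2⟩
      have h1 : H t₀ ≤ H ε := hHanti hεI ht₀ (hε.2.trans hδt₀)
      have hPb : ‖P ε‖ ≤ C * ε := by
        have hb := intervalIntegral.norm_integral_le_of_norm_le_const (C := C) (f := G)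
          (a := (0:ℝ)) (b := ε) (fun x hx => by
            rw [uIoc_of_le hε.1.le] at hx
            exact hC x ⟨hx.1.le, hx.2.trans (hε.2.trans hδt₀)⟩)
        simpa [hPdef, abs_of_nonneg hε.1.le] using hb
      have hPb' : -(C * ε) ≤ P ε ∧ P ε ≤ C * ε := abs_le.mp (by rwa [Real.norm_eq_abs] at hPb)
      have hδb : C * ε ≤ c / 2 := by
        have h2 : ε ≤ c / (2 * (C + 1)) := hε.2.trans (min_le_right _ _)
        have h3 : 0 < c := hH0
        have h4 : C * ε ≤ C * (c / (2 * (C + 1))) := mul_le_mul_of_nonneg_left h2 hCpos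
        have h5 : C * (c / (2 * (C + 1))) = c * (C / (C + 1)) / 2 := by
          field_simp
        have h6 : C / (C + 1) ≤ 1 := (div_le_one (by positivity)).mpr (by linarith)
        have h7 : c * (C / (C + 1)) ≤ c * 1 :=
          mul_le_mul_of_nonneg_left h6 h3.le
        rw [h5] at h4
        linarith
      have h1' : c ≤ h ε + P ε := by rw [hcdef]; rw [hHsplit ε] at h1; exact h1
      linarith [hPb'.2]
    -- q lower bound on Ioc 0 δ
    have hqlb : ∀ t ∈ Ioc 0 δ, c / 2 * (M ^ 2)⁻¹ * (t ^ 2)⁻¹ ≤ q t := by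
      intro t ht
      have htI : t ∈ Ioo 0 l := ⟨ht.1, lt_of_le_of_lt (ht.2.trans hδt₀) ht₀.2⟩
      have hφt := hφpos t htI
      have hub := hφub t ⟨ht.1.le, ht.2.trans hδt₀⟩
      have hq : q t = h t / φ t ^ 2 := by
        rw [hhq t htI]; field_simp
      rw [hq]
      have h1 : c / 2 / (M * t) ^ 2 ≤ h t / φ t ^ 2 :=
        div_le_div₀ (le_trans (by linarith [hH0] : (0:ℝ) ≤ c / 2) (hhε t ht)) (hhε t ht)
          (by positivity) (pow_le_pow_left₀ hφt.le hub 2)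
      calc c / 2 * (M ^ 2)⁻¹ * (t ^ 2)⁻¹ = c / 2 / (M * t) ^ 2 := by ring
        _ ≤ h t / φ t ^ 2 := h1
    -- integral lower bound
    have hkey : ∀ ε ∈ Ioo 0 δ, c / 2 * (M ^ 2)⁻¹ * (ε⁻¹ - δ⁻¹) ≤ ψ δ - ψ ε := by
      intro ε hε
      have hεI : ε ∈ Ioo 0 l := ⟨hε.1, lt_of_lt_of_le hε.2 hδl.le⟩
      have hsub : Icc ε δ ⊆ Ioo 0 l := fun x hx =>
        ⟨lt_of_lt_of_le hε.1 hx.1, lt_of_le_of_lt hx.2 hδl⟩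
      rw [hFTC ε δ hεI hδIoo hε.2.le]
      have hgint : IntervalIntegrable (fun t => c / 2 * (M ^ 2)⁻¹ * (t ^ 2)⁻¹)
          MeasureTheory.volume ε δ := by
        apply ContinuousOn.intervalIntegrable
        apply (continuousOn_const.mul (ContinuousOn.inv₀ (continuousOn_pow 2) ?_))
        intro x hx
        rw [uIcc_of_le hε.2.le] at hx
        have : 0 < x := lt_of_lt_of_le hε.1 hx.1
        positivity
      have hqint : IntervalIntegrable q MeasureTheory.volume ε δ := by
        apply ContinuousOn.intervalIntegrable
        exact hqc.mono (by rw [uIcc_of_le hε.2.le]; exact hsub)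
      have hmono := intervalIntegral.integral_mono_on hε.2.le hgint hqint
        (fun x hx => hqlb x ⟨lt_of_lt_of_le hε.1 hx.1, hx.2⟩)
      refine le_trans (le_of_eq ?_) hmono
      -- compute ∫ ε..δ c/2 * (M^2)⁻¹ * (t^2)⁻¹
      have hftc : ∫ t in ε..δ, c / 2 * (M ^ 2)⁻¹ * (t ^ 2)⁻¹ =
          -(c / 2 * (M ^ 2)⁻¹) * δ⁻¹ - -(c / 2 * (M ^ 2)⁻¹) * ε⁻¹ := by
        refine intervalIntegral.integral_eq_sub_of_hasDerivAt
          (f := fun t => -(c / 2 * (M ^ 2)⁻¹) * t⁻¹) (fun x hx => ?_) hgint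
        · rw [uIcc_of_le hε.2.le] at hx
          have hx0 : x ≠ 0 := (lt_of_lt_of_le hε.1 hx.1).ne'
          have hD := (hasDerivAt_inv hx0).const_mul (-(c / 2 * (M ^ 2)⁻¹))
          exact hD.congr_deriv (by ring)
      rw [hftc]
      ring
    -- contradiction via limits
    have hlim1 : Filter.Tendsto (fun ε => ψ δ - ψ ε) (nhdsWithin 0 (Set.Ioi 0)) (nhds (ψ δ)) := by
      simpa using (tendsto_const_nhds (x := ψ δ)).sub hψ0
    have hlim2 : Filter.Tendsto (fun ε : ℝ => c / 2 * (M ^ 2)⁻¹ * (ε⁻¹ - δ⁻¹))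
        (nhdsWithin 0 (Set.Ioi 0)) Filter.atTop := by
      have h1 : Filter.Tendsto (fun ε : ℝ => ε⁻¹ - δ⁻¹) (nhdsWithin 0 (Set.Ioi 0))
          Filter.atTop := by
        simp only [sub_eq_add_neg]
        exact tendsto_atTop_add_const_right _ _ tendsto_inv_nhdsGT_zero
      exact Filter.Tendsto.const_mul_atTop (by positivity) h1
    have : Filter.Tendsto (fun ε => ψ δ - ψ ε) (nhdsWithin 0 (Set.Ioi 0)) Filter.atTop := by
      apply Filter.tendsto_atTop_mono' _ _ hlim2
      filter_upwards [Ioo_mem_nhdsGT_of_mem (left_mem_Ico.mpr hδpos)] with ε hε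
      exact hkey ε hε
    exact not_tendsto_atTop_of_tendsto_nhds hlim1 this
  -- Main conclusion
  intro r hr
  obtain ⟨hr0, hrl⟩ := hr
  have hrI : r ∈ Ioo 0 l := ⟨hr0, hrl⟩
  set f : ℝ → ℝ := fun t => -((1 / φ t ^ 2) * P t) with hfdef
  clear_value f
  have hIocsub : Ioc 0 r ⊆ Ioo 0 l := fun x hx => ⟨hx.1, lt_of_le_of_lt hx.2 hrl⟩
  have hqf : ∀ t ∈ Ioo 0 l, q t ≤ f t := by
    intro t ht
    have hφt := hφpos t ht
    have hHt := hHle t ht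
    rw [hHsplit t] at hHt
    have hq : q t = h t / φ t ^ 2 := by
      rw [hhq t ht]; field_simp
    have hf : f t = -(P t) / φ t ^ 2 := by rw [hfdef]; ring
    rw [hq, hf]
    exact (div_le_div_iff_of_pos_right (by positivity)).mpr (by linarith)
  -- φ' ≥ 1/2 near 0, hence φ t ≥ t/2 near 0
  have hφ'cont : Filter.Tendsto φ' (nhdsWithin 0 (Ico 0 l)) (nhds 1) := by
    have := hφ'c 0 ⟨le_refl 0, hl⟩
    rwa [ContinuousWithinAt, hφ'0] at this
  have hev : ∀ᶠ t in nhdsWithin 0 (Ico 0 l), 1 / 2 < φ' t :=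
    hφ'cont.eventually (eventually_gt_nhds (by norm_num))
  rw [eventually_nhdsWithin_iff, Metric.eventually_nhds_iff] at hev
  obtain ⟨e, he, hball⟩ := hev
  set δ₁ := min (e / 2) r with hδ₁def
  have hδ₁pos : 0 < δ₁ := lt_min (by linarith) hr0
  have hδ₁r : δ₁ ≤ r := min_le_right _ _
  have hδ₁l : δ₁ < l := lt_of_le_of_lt hδ₁r hrl
  have hφ'lb : ∀ t ∈ Icc 0 δ₁, 1 / 2 ≤ φ' t := by
    intro t ht
    refine le_of_lt (hball ?_ ⟨ht.1, lt_of_le_of_lt (ht.2.trans hδ₁r) hrl⟩)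
    rw [Real.dist_eq, sub_zero, abs_of_nonneg ht.1]
    exact lt_of_le_of_lt (ht.2.trans (min_le_left _ _)) (by linarith)
  have hmono : MonotoneOn (fun t => φ t - t / 2) (Icc 0 δ₁) := by
    have hDD : ∀ t ∈ Ioo 0 δ₁, HasDerivAt (fun t => φ t - t / 2) (φ' t - 1 / 2) t := by
      intro t ht
      exact (hφD t ⟨ht.1, lt_trans ht.2 hδ₁l⟩).sub ((hasDerivAt_id t).div_const 2)
    apply monotoneOn_of_deriv_nonneg (convex_Icc 0 δ₁)
    · exact (hφc.mono (hIccsub δ₁ hδ₁l)).sub (continuousOn_id.div_const 2)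
    · intro t ht
      rw [interior_Icc] at ht
      exact (hDD t ht).differentiableAt.differentiableWithinAt
    · intro t ht
      rw [interior_Icc] at ht
      rw [(hDD t ht).deriv]
      have := hφ'lb t ⟨ht.1.le, ht.2.le⟩
      linarith
  have hφlb : ∀ t ∈ Icc 0 δ₁, t / 2 ≤ φ t := by
    intro t ht
    have := hmono (left_mem_Icc.mpr hδ₁pos.le) ht ht.1
    simp only [hφ0] at this
    linarith
  -- global bounds on Icc 0 r
  obtain ⟨M, hM⟩ := isCompact_Icc.exists_bound_of_continuousOn (hφ'c.mono (hIccsub r hrl))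
  have hM1 : (1:ℝ) ≤ M := by
    have := hM 0 ⟨le_refl _, hr0.le⟩
    rwa [hφ'0, norm_one] at this
  have hφub : ∀ t ∈ Icc 0 r, |φ t| ≤ M * t := by
    intro t ht
    have hb := (convex_Icc (0:ℝ) r).norm_image_sub_le_of_norm_hasDerivWithin_le
      (fun x hx => (hφ' x (hIccsub r hrl hx)).mono (hIccsub r hrl))
      hM (left_mem_Icc.mpr hr0.le) ht
    rw [hφ0, sub_zero, sub_zero] at hb
    calc |φ t| ≤ M * |t| := by simpa [Real.norm_eq_abs] using hb
      _ = M * t := by rw [abs_of_nonneg ht.1]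
  obtain ⟨C', hC'⟩ := isCompact_Icc.exists_bound_of_continuousOn
    ((hφ''c.add (hφc.mul hK)).mono (hIccsub r hrl))
  have hC'0 : (0:ℝ) ≤ C' := le_trans (norm_nonneg _) (hC' 0 ⟨le_refl _, hr0.le⟩)
  -- |P t| ≤ C' * M * (t^2/2) on Icc 0 r
  have hPbd : ∀ t ∈ Icc 0 r, |P t| ≤ C' * M * (t ^ 2 / 2) := by
    intro t ht
    have hPt : P t = ∫ s in (0:ℝ)..t, G s := by rw [hPdef]
    rw [hPt]
    have htl : t < l := lt_of_le_of_lt ht.2 hrl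
    have hint1 : IntervalIntegrable G MeasureTheory.volume 0 t := hGint t ht.1 htl
    have hint2 : IntervalIntegrable (fun s => C' * M * s) MeasureTheory.volume 0 t :=
      (continuous_const.mul continuous_id).intervalIntegrable 0 t
    have hint3 : IntervalIntegrable (fun s => -(C' * M * s)) MeasureTheory.volume 0 t :=
      hint2.neg
    have hGb : ∀ s ∈ Icc 0 t, |G s| ≤ C' * M * s := by
      intro s hs
      have hs' : s ∈ Icc 0 r := ⟨hs.1, hs.2.trans ht.2⟩
      have h1 : |φ'' s + φ s * K s| ≤ C' := by
        have := hC' s hs'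
        rwa [Real.norm_eq_abs] at this
      have h2 : |φ s| ≤ M * s := hφub s hs'
      calc |G s| = |φ'' s + φ s * K s| * |φ s| := by rw [hGdef]; exact abs_mul _ _
        _ ≤ C' * (M * s) := by
            apply mul_le_mul h1 h2 (abs_nonneg _) hC'0
        _ = C' * M * s := by ring
    have hup : (∫ s in (0:ℝ)..t, G s) ≤ C' * M * (t ^ 2 / 2) := by
      have := intervalIntegral.integral_mono_on ht.1 hint1 hint2
        (fun s hs => le_trans (le_abs_self _) (hGb s hs))
      calc (∫ s in (0:ℝ)..t, G s) ≤ ∫ s in (0:ℝ)..t, C' * M * s := this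
        _ = C' * M * (t ^ 2 / 2) := by
            rw [intervalIntegral.integral_const_mul, integral_id]
            ring
    have hlo : -(C' * M * (t ^ 2 / 2)) ≤ ∫ s in (0:ℝ)..t, G s := by
      have := intervalIntegral.integral_mono_on ht.1 hint3 hint1
        (fun s hs => by
          have := hGb s hs
          have h1 := neg_abs_le (G s)
          linarith)
      calc -(C' * M * (t ^ 2 / 2)) = ∫ s in (0:ℝ)..t, -(C' * M * s) := by
            rw [intervalIntegral.integral_neg, intervalIntegral.integral_const_mul, integral_id]
            ring
        _ ≤ ∫ s in (0:ℝ)..t, G s := this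
    exact abs_le.mpr ⟨hlo, hup⟩
  -- continuity of f on Ioc 0 r
  have hPcont : ContinuousOn P (Icc 0 r) := by
    rw [hPdef]
    have h1 : IntegrableOn G (uIcc 0 r) MeasureTheory.volume := by
      rw [uIcc_of_le hr0.le]
      exact (hGc.mono (hIccsub r hrl)).integrableOn_Icc
    have := intervalIntegral.continuousOn_primitive_interval h1
    rwa [uIcc_of_le hr0.le] at this
  have hfc : ContinuousOn f (Ioc 0 r) := by
    rw [hfdef]
    apply ContinuousOn.neg
    apply ContinuousOn.mul ?_ (hPcont.mono Ioc_subset_Icc_self)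
    apply ContinuousOn.div continuousOn_const
    · exact ((hφc.mono (fun x hx => hIoo (hIocsub hx))).pow 2)
    · exact fun t ht => pow_ne_zero 2 (hφpos t (hIocsub ht)).ne'
  -- the bound B
  obtain ⟨B₂, hB₂⟩ := isCompact_Icc.exists_bound_of_continuousOn
    (hfc.mono (fun x hx => ⟨lt_of_lt_of_le hδ₁pos hx.1, hx.2⟩ : Icc δ₁ r ⊆ Ioc 0 r))
  set B := max (2 * (C' * M)) B₂ with hBdef
  have hfbd : ∀ t ∈ Ioc 0 r, ‖f t‖ ≤ B := by
    intro t ht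
    by_cases hcase : t ≤ δ₁
    · have h1 : t / 2 ≤ φ t := hφlb t ⟨ht.1.le, hcase⟩
      have h2 : |P t| ≤ C' * M * (t ^ 2 / 2) := hPbd t ⟨ht.1.le, ht.2⟩
      have hφt := hφpos t (hIocsub ht)
      have hft : ‖f t‖ = |P t| / φ t ^ 2 := by
        rw [hfdef, Real.norm_eq_abs, abs_neg, abs_mul, abs_of_pos (by positivity :
          (0:ℝ) < 1 / φ t ^ 2)]
        ring
      rw [hft]
      refine le_trans ?_ (le_max_left _ _)
      calc |P t| / φ t ^ 2 ≤ C' * M * (t ^ 2 / 2) / (t ^ 2 / 4) := by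
            apply div_le_div₀ (by positivity) h2 (by nlinarith [ht.1])
            nlinarith [ht.1]
        _ = 2 * (C' * M) := by
            field_simp [ht.1.ne']
            ring
    · exact (hB₂ t ⟨le_of_not_ge hcase, ht.2⟩).trans (le_max_right _ _)
  have hB0 : (0:ℝ) ≤ B := le_trans (norm_nonneg _) (hfbd r ⟨hr0, le_refl r⟩)
  -- integrability of f on [0, r]
  have hfint : IntervalIntegrable f MeasureTheory.volume 0 r := by
    rw [intervalIntegrable_iff_integrableOn_Ioc_of_le hr0.le]
    exact ⟨hfc.aestronglyMeasurable measurableSet_Ioc,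
      MeasureTheory.HasFiniteIntegral.restrict_of_bounded (C := B) measure_Ioc_lt_top
        ((MeasureTheory.ae_restrict_iff' measurableSet_Ioc).mpr
          (Filter.Eventually.of_forall hfbd))⟩
  -- tail integrals tend to 0
  have htail : Filter.Tendsto (fun ε => ∫ t in (0:ℝ)..ε, f t) (nhdsWithin 0 (Set.Ioi 0))
      (nhds 0) := by
    refine squeeze_zero_norm' (a := fun ε : ℝ => B * ε) ?_ ?_
    · filter_upwards [Ioo_mem_nhdsGT_of_mem (left_mem_Ico.mpr hr0)] with ε hε
      have := intervalIntegral.norm_integral_le_of_norm_le_const (C := B) (f := f)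
        (a := (0:ℝ)) (b := ε) (fun x hx => by
          rw [uIoc_of_le hε.1.le] at hx
          exact hfbd x ⟨hx.1, hx.2.trans hε.2.le⟩)
      simpa [abs_of_nonneg hε.1.le] using this
    · have h1 : Filter.Tendsto (fun ε : ℝ => B * ε) (nhds 0) (nhds 0) := by
        simpa using ((continuous_id.tendsto (0:ℝ)).const_mul B)
      exact h1.mono_left nhdsWithin_le_nhds
  -- main inequality for positive ε
  have hmain : ∀ ε ∈ Ioo 0 r, ψ r ≤ ψ ε + (∫ t in (0:ℝ)..r, f t) - ∫ t in (0:ℝ)..ε, f t := by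
    intro ε hε
    have hεI : ε ∈ Ioo 0 l := ⟨hε.1, lt_trans hε.2 hrl⟩
    have hsub : Icc ε r ⊆ Ioo 0 l := fun x hx =>
      ⟨lt_of_lt_of_le hε.1 hx.1, lt_of_le_of_lt hx.2 hrl⟩
    have h1 : ψ r - ψ ε = ∫ t in ε..r, q t := hFTC ε r hεI hrI hε.2.le
    have hqint : IntervalIntegrable q MeasureTheory.volume ε r :=
      (hqc.mono (by rw [uIcc_of_le hε.2.le]; exact hsub)).intervalIntegrable
    have hfint2 : IntervalIntegrable f MeasureTheory.volume ε r := by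
      apply hfint.mono_set
      rw [uIcc_of_le hε.2.le, uIcc_of_le hr0.le]
      exact Icc_subset_Icc hε.1.le (le_refl r)
    have hfint1 : IntervalIntegrable f MeasureTheory.volume 0 ε := by
      apply hfint.mono_set
      rw [uIcc_of_le hε.1.le, uIcc_of_le hr0.le]
      exact Icc_subset_Icc (le_refl 0) hε.2.le
    have h2 : (∫ t in ε..r, q t) ≤ ∫ t in ε..r, f t :=
      intervalIntegral.integral_mono_on hε.2.le hqint hfint2 (fun x hx => hqf x (hsub hx))
    have h3 : (∫ t in (0:ℝ)..ε, f t) + (∫ t in ε..r, f t) = ∫ t in (0:ℝ)..r, f t :=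
      intervalIntegral.integral_add_adjacent_intervals hfint1 hfint2
    linarith
  have hlimR : Filter.Tendsto (fun ε => ψ ε + (∫ t in (0:ℝ)..r, f t) - ∫ t in (0:ℝ)..ε, f t)
      (nhdsWithin 0 (Set.Ioi 0)) (nhds (∫ t in (0:ℝ)..r, f t)) := by
    have := (hψ0.add (tendsto_const_nhds (x := ∫ t in (0:ℝ)..r, f t))).sub htail
    simpa using this
  have hfinal : ψ r ≤ ∫ t in (0:ℝ)..r, f t := by
    refine ge_of_tendsto hlimR ?_
    filter_upwards [Ioo_mem_nhdsGT_of_mem (left_mem_Ico.mpr hr0)] with ε hε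
    exact hmain ε hε
  have hgoal : Real.log (J r / φ r) = ψ r := by
    rw [hψdef, Real.log_div (hJpos r hrI).ne' (hφpos r hrI).ne']
  rw [hgoal]
  calc ψ r ≤ ∫ t in (0:ℝ)..r, f t := hfinal
    _ = -∫ t in (0:ℝ)..r, (1 / φ t ^ 2) * ∫ s in (0:ℝ)..t, G s := by
        simp only [hfdef, hPdef]
        rw [intervalIntegral.integral_neg]
end
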